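/- Let d ≥ 1 and let R₀ and R be positive definite real symmetric d×d matrices with det R₀ = det R = 1. Then the Kullback–Leibler divergence between the associated angular central Gaussian distributions is KL(μ_{R₀} ‖ μ_R) = (d/2) · ∫_{S^{d−1}} log( (xᵀ R⁻¹ x) / (xᵀ R₀⁻¹ x) ) dμ_{R₀}(x). -/

import Mathlib

open MeasureTheory Matrix

/-- The centered Gaussian measure `N(0,S)` on `ℝ^d` (as `EuclideanSpace ℝ (Fin d)`). -/
noncomputable def gaussianE (d : ℕ) (S : Matrix (Fin d) (Fin d) ℝ) :
    Measure (EuclideanSpace ℝ (Fin d)) :=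
  volume.withDensity fun x =>
    ENNReal.ofReal ((Real.sqrt ((2 * Real.pi) ^ d * S.det))⁻¹ *
      Real.exp (-(1 / 2) * ((fun i => x i) ⬝ᵥ S⁻¹.mulVec fun i => x i)))

/-- The normalization map `x ↦ x / ‖x‖`. -/
noncomputable def normalizeSphere (d : ℕ) (x : EuclideanSpace ℝ (Fin d)) :
    EuclideanSpace ℝ (Fin d) := ‖x‖⁻¹ • x

/-- The angular central Gaussian distribution with scatter matrix `R`: the pushforward of
`N(0,R)` under `x ↦ x / ‖x‖`, viewed as a measure on the ambient space supported on the
unit sphere. -/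
noncomputable def acg (d : ℕ) (R : Matrix (Fin d) (Fin d) ℝ) :
    Measure (EuclideanSpace ℝ (Fin d)) :=
  (gaussianE d R).map (normalizeSphere d)

/-- The Kullback–Leibler divergence `KL(μ‖ν) = ∫ log (dμ/dν) dμ`. -/
noncomputable def klDiv {α : Type*} [MeasurableSpace α] (μ ν : Measure α) : ℝ :=
  ∫ x, Real.log (μ.rnDeriv ν x).toReal ∂μ

/-!
Put `M = R⁻¹`, `N = R₀⁻¹` and `c x = √(xᵀMx / xᵀNx)`, a function constant along rays. The
radial rescaling `φ x = c x • x` is a bijection of `ℝᵈ ∖ {0}` preserving every ray, with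
`(φ x)ᵀ N (φ x) = xᵀ M x`; since `c` is `0`-homogeneous, Euler's identity `Dc(x) x = 0` makes
`Dφ(x) = c x • id + Dc(x).smulRight x` a scalar plus a nilpotent, so its Jacobian is `c x ^ d`.
Changing variables by `φ` in the `N(0,R₀)` integral (the normalising constants agree because
both determinants are `1`) shows that `μ_{R₀}` has density `u ↦ c u ^ d` with respect to `μ_R`,
whose logarithm is `(d/2) log (uᵀMu / uᵀNu)`.
-/

open Module

theorem LinearMap.det_algebraMap_add_of_isNilpotent {R M : Type*} [CommRing R] [IsDomain R]
    [AddCommGroup M] [Module R M] [Module.Finite R M] [Module.Free R M] (a : R)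
    {N : Module.End R M} (hN : IsNilpotent N) :
    (algebraMap R (Module.End R M) a + N).det = a ^ finrank R M := by
  rw [← sub_neg_eq_add, ← LinearMap.eval_charpoly, hN.neg.charpoly_eq_X_pow_finrank,
    Polynomial.eval_pow, Polynomial.eval_X]

theorem ContinuousLinearMap.isNilpotent_smulRight {𝕜 E : Type*} [NontriviallyNormedField 𝕜]
    [NormedAddCommGroup E] [NormedSpace 𝕜 E] {l : E →L[𝕜] 𝕜} {v : E} (hlv : l v = 0) :
    IsNilpotent (l.smulRight v : E →ₗ[𝕜] E) :=
  ⟨2, LinearMap.ext fun x => by simp [pow_two, hlv]⟩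

theorem fderiv_apply_self_eq_zero_of_smul_invariant {E F : Type*} [NormedAddCommGroup E]
    [NormedSpace ℝ E] [NormedAddCommGroup F] [NormedSpace ℝ F] {f : E → F} {x : E}
    (hf : DifferentiableAt ℝ f x) (hhom : ∀ t : ℝ, 0 < t → f (t • x) = f x) :
    fderiv ℝ f x x = 0 := by
  have hline : HasDerivAt (fun t : ℝ => t • x) x 1 := by
    simpa using (hasDerivAt_id (1 : ℝ)).smul_const x
  have hray : HasDerivAt (fun t : ℝ => f (t • x)) (fderiv ℝ f x x) 1 :=
    hf.hasFDerivAt.comp_hasDerivAt_of_eq 1 hline (one_smul ℝ x).symm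
  have hconst : (fun t : ℝ => f (t • x)) =ᶠ[nhds 1] fun _ => f x := by
    filter_upwards [eventually_gt_nhds one_pos] with t ht using hhom t ht
  exact hray.unique ((hasDerivAt_const 1 (f x)).congr_of_eventuallyEq hconst)

section RadialRescaling

variable {E : Type*} [NormedAddCommGroup E] [NormedSpace ℝ E] {c : E → ℝ}

theorem smul_self_injOn_compl_zero (hc : ∀ x ≠ 0, 0 < c x)
    (hhom : ∀ x, ∀ t : ℝ, 0 < t → c (t • x) = c x) :
    Set.InjOn (fun x => c x • x) {0}ᶜ := by
  intro x hx y hy hxy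
  simp only at hxy
  have hy_eq : y = (c x / c y) • x := by
    rw [div_eq_inv_mul, mul_smul, hxy, inv_smul_smul₀ (hc y hy).ne']
  have hcxy : c x = c y := by
    have := hhom x _ (div_pos (hc x hx) (hc y hy))
    rwa [← hy_eq, eq_comm] at this
  rw [hcxy] at hxy
  exact smul_right_injective E (hc y hy).ne' hxy

theorem image_smul_self_compl_zero (hc : ∀ x ≠ 0, 0 < c x)
    (hhom : ∀ x, ∀ t : ℝ, 0 < t → c (t • x) = c x) :
    (fun x => c x • x) '' {0}ᶜ = {0}ᶜ := by
  refine Set.Subset.antisymm ?_ fun y hy => ⟨(c y)⁻¹ • y, ?_, ?_⟩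
  · rintro _ ⟨x, hx, rfl⟩
    exact smul_ne_zero (hc x hx).ne' hx
  · exact smul_ne_zero (inv_ne_zero (hc y hy).ne') hy
  · simp only
    rw [hhom y _ (inv_pos.2 (hc y hy)), smul_inv_smul₀ (hc y hy).ne']

variable [FiniteDimensional ℝ E]

theorem det_smul_id_add_fderiv_smulRight {x : E} (hcx : DifferentiableAt ℝ c x)
    (hhom : ∀ t : ℝ, 0 < t → c (t • x) = c x) :
    (c x • ContinuousLinearMap.id ℝ E + (fderiv ℝ c x).smulRight x).det =
      c x ^ finrank ℝ E := by
  have hEuler := fderiv_apply_self_eq_zero_of_smul_invariant hcx hhom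
  rw [← LinearMap.det_algebraMap_add_of_isNilpotent (c x)
    (ContinuousLinearMap.isNilpotent_smulRight hEuler)]
  congr 1

variable [MeasurableSpace E] [BorelSpace E] [Nontrivial E] (μ : Measure E) [μ.IsAddHaarMeasure]

theorem lintegral_comp_smul_self (hc : ∀ x ≠ 0, 0 < c x)
    (hhom : ∀ x, ∀ t : ℝ, 0 < t → c (t • x) = c x)
    (hdiff : ∀ x ≠ 0, DifferentiableAt ℝ c x) (f : E → ENNReal) :
    ∫⁻ x, ENNReal.ofReal (c x ^ finrank ℝ E) * f (c x • x) ∂μ = ∫⁻ y, f y ∂μ := by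
  have hderiv : ∀ x ∈ ({0}ᶜ : Set E), HasFDerivWithinAt (fun x => c x • x)
      (c x • ContinuousLinearMap.id ℝ E + (fderiv ℝ c x).smulRight x) {0}ᶜ x :=
    fun x hx => ((hdiff x hx).hasFDerivAt.smul (hasFDerivAt_id x)).hasFDerivWithinAt
  calc ∫⁻ x, ENNReal.ofReal (c x ^ finrank ℝ E) * f (c x • x) ∂μ
      = ∫⁻ x in {0}ᶜ, ENNReal.ofReal
          |(c x • ContinuousLinearMap.id ℝ E + (fderiv ℝ c x).smulRight x).det| *
          f (c x • x) ∂μ := by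
        conv_lhs => rw [← restrict_compl_singleton (μ := μ) 0]
        refine setLIntegral_congr_fun (measurableSet_singleton (0 : E)).compl fun x hx => ?_
        rw [det_smul_id_add_fderiv_smulRight (hdiff x hx) (hhom x),
          abs_of_pos (pow_pos (hc x hx) _)]
    _ = ∫⁻ y in (fun x => c x • x) '' {0}ᶜ, f y ∂μ :=
        (lintegral_image_eq_lintegral_abs_det_fderiv_mul μ (measurableSet_singleton 0).compl
          hderiv (smul_self_injOn_compl_zero hc hhom) f).symm
    _ = ∫⁻ y, f y ∂μ := by
        rw [image_smul_self_compl_zero hc hhom, restrict_compl_singleton]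

theorem map_inv_norm_smul_withDensity_eq (hc : ∀ x ≠ 0, 0 < c x)
    (hhom : ∀ x, ∀ t : ℝ, 0 < t → c (t • x) = c x)
    (hdiff : ∀ x ≠ 0, DifferentiableAt ℝ c x) (hcm : Measurable c)
    {g₀ g : E → ENNReal} (hg : Measurable g) (hdens : ∀ x ≠ 0, g₀ (c x • x) = g x) :
    (μ.withDensity g₀).map (fun x => ‖x‖⁻¹ • x) =
      ((μ.withDensity g).map (fun x => ‖x‖⁻¹ • x)).withDensity
        fun u => ENNReal.ofReal (c u ^ finrank ℝ E) := by
  set π : E → E := fun x => ‖x‖⁻¹ • x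
  have hπ : Measurable π := (measurable_norm.inv).smul measurable_id
  have hπ_smul : ∀ x, ∀ t : ℝ, 0 < t → π (t • x) = π x := by
    intro x t ht
    show ‖t • x‖⁻¹ • t • x = ‖x‖⁻¹ • x
    rw [norm_smul, Real.norm_of_nonneg ht.le, mul_inv, mul_comm t⁻¹, mul_smul,
      inv_smul_smul₀ ht.ne']
  have hh : Measurable fun u => ENNReal.ofReal (c u ^ finrank ℝ E) :=
    (hcm.pow_const _).ennreal_ofReal
  ext A hA
  have hpre : MeasurableSet (π ⁻¹' A) := hπ hA
  have hpoint : ∀ᵐ x ∂μ, ENNReal.ofReal (c x ^ finrank ℝ E) * (π ⁻¹' A).indicator g₀ (c x • x) =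
      (π ⁻¹' A).indicator (fun x => g x * ENNReal.ofReal (c (π x) ^ finrank ℝ E)) x := by
    filter_upwards [Measure.ae_ne μ 0] with x hx
    have hcx := hc x hx
    have hπx : c (π x) = c x := hhom x _ (inv_pos.2 (norm_pos_iff.2 hx))
    have hmem : c x • x ∈ π ⁻¹' A ↔ x ∈ π ⁻¹' A := by
      rw [Set.mem_preimage, Set.mem_preimage, hπ_smul x _ hcx]
    by_cases hxA : x ∈ π ⁻¹' A
    · rw [Set.indicator_of_mem (hmem.2 hxA), Set.indicator_of_mem hxA, hdens x hx, hπx, mul_comm]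
    · rw [Set.indicator_of_notMem (mt hmem.1 hxA), Set.indicator_of_notMem hxA, mul_zero]
  calc (μ.withDensity g₀).map π A
      = ∫⁻ y, (π ⁻¹' A).indicator g₀ y ∂μ := by
        rw [Measure.map_apply hπ hA, withDensity_apply _ hpre, lintegral_indicator hpre]
    _ = ∫⁻ x, (π ⁻¹' A).indicator (fun x => g x * ENNReal.ofReal (c (π x) ^ finrank ℝ E)) x ∂μ := by
        rw [← lintegral_comp_smul_self μ hc hhom hdiff]
        exact lintegral_congr_ae hpoint
    _ = ∫⁻ x in π ⁻¹' A, ENNReal.ofReal (c (π x) ^ finrank ℝ E) ∂μ.withDensity g := by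
        rw [lintegral_indicator hpre]
        exact (setLIntegral_withDensity_eq_setLIntegral_mul μ hg (hh.comp hπ) hpre).symm
    _ = ((μ.withDensity g).map π).withDensity (fun u => ENNReal.ofReal (c u ^ finrank ℝ E)) A := by
        rw [withDensity_apply _ hA, setLIntegral_map hA hh hπ]

end RadialRescaling

section QuadForm

variable {d : ℕ}

noncomputable def quadForm (M : Matrix (Fin d) (Fin d) ℝ) (x : EuclideanSpace ℝ (Fin d)) : ℝ :=
  (fun i => x i) ⬝ᵥ M *ᵥ fun i => x i

@[fun_prop]
theorem differentiable_quadForm (M : Matrix (Fin d) (Fin d) ℝ) :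
    Differentiable ℝ (quadForm M) := by
  unfold quadForm
  simp only [dotProduct, mulVec]
  fun_prop

@[fun_prop]
theorem continuous_quadForm (M : Matrix (Fin d) (Fin d) ℝ) : Continuous (quadForm M) :=
  (differentiable_quadForm M).continuous

theorem quadForm_smul (M : Matrix (Fin d) (Fin d) ℝ) (t : ℝ) (x : EuclideanSpace ℝ (Fin d)) :
    quadForm M (t • x) = t ^ 2 * quadForm M x := by
  change (t • x.ofLp) ⬝ᵥ M *ᵥ (t • x.ofLp) = t ^ 2 * (x.ofLp ⬝ᵥ M *ᵥ x.ofLp)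
  rw [mulVec_smul, dotProduct_smul, smul_dotProduct, smul_eq_mul, smul_eq_mul, ← mul_assoc, sq]

theorem Matrix.PosDef.quadForm_pos {M : Matrix (Fin d) (Fin d) ℝ} (hM : M.PosDef)
    {x : EuclideanSpace ℝ (Fin d)} (hx : x ≠ 0) : 0 < quadForm M x := by
  simpa [quadForm] using hM.dotProduct_mulVec_pos (x := x.ofLp) (by simpa using hx)

theorem Matrix.PosSemidef.quadForm_nonneg {M : Matrix (Fin d) (Fin d) ℝ} (hM : M.PosSemidef)
    (x : EuclideanSpace ℝ (Fin d)) : 0 ≤ quadForm M x := by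
  simpa [quadForm] using hM.dotProduct_mulVec_nonneg x.ofLp

end QuadForm

theorem exists_pos_mul_sq_norm_le {E : Type*} [NormedAddCommGroup E] [NormedSpace ℝ E]
    [FiniteDimensional ℝ E] {q : E → ℝ} (hq : Continuous q)
    (hsmul : ∀ (t : ℝ) x, q (t • x) = t ^ 2 * q x) (hpos : ∀ x ≠ 0, 0 < q x) :
    ∃ ε > 0, ∀ x, ε * ‖x‖ ^ 2 ≤ q x := by
  obtain ⟨ε, hε, hle⟩ := (isCompact_sphere (0 : E) 1).exists_forall_le' hq.continuousOn
    fun x hx => hpos x (ne_zero_of_mem_unit_sphere ⟨x, hx⟩)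
  refine ⟨ε, hε, fun x => ?_⟩
  rcases eq_or_ne x 0 with rfl | hx
  · have h0 : q 0 = 0 := by simpa using hsmul 0 0
    simp [h0]
  · have hnx : 0 < ‖x‖ := norm_pos_iff.2 hx
    have := hle (‖x‖⁻¹ • x) (by simp [norm_smul, hnx.ne'])
    rwa [hsmul, inv_pow, ← div_eq_inv_mul, le_div_iff₀ (by positivity)] at this

theorem integrable_exp_neg_mul_sq_norm {V : Type*} [NormedAddCommGroup V]
    [InnerProductSpace ℝ V] [FiniteDimensional ℝ V] [MeasurableSpace V] [BorelSpace V]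
    {b : ℝ} (hb : 0 < b) :
    Integrable fun v : V => Real.exp (-b * ‖v‖ ^ 2) := by
  refine (GaussianFourier.integrable_cexp_neg_mul_sq_norm_add (V := V) (b := b)
    (by simpa using hb) 0 0).norm.congr (ae_of_all _ fun v => ?_)
  simp only [inner_zero_left, Complex.ofReal_zero, mul_zero, add_zero, Complex.norm_exp]
  norm_cast

theorem klDiv_withDensity_self {α : Type*} [MeasurableSpace α] (ν : Measure α) [SigmaFinite ν]
    {h : α → ENNReal} (hh : Measurable h) :
    klDiv (ν.withDensity h) ν = ∫ x, Real.log (h x).toReal ∂ν.withDensity h :=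
  integral_congr_ae <| Filter.Eventually.mono ((withDensity_absolutelyContinuous ν h).ae_le
    (Measure.rnDeriv_withDensity ν hh)) fun _ hx => congrArg (fun t => Real.log t.toReal) hx

section AngularCentralGaussian

variable {d : ℕ}

theorem Matrix.PosDef.integrable_exp_quadForm {M : Matrix (Fin d) (Fin d) ℝ} (hM : M.PosDef) :
    Integrable fun x => Real.exp (-(1 / 2) * quadForm M x) := by
  obtain ⟨ε, hε, hle⟩ := exists_pos_mul_sq_norm_le (continuous_quadForm M) (quadForm_smul M)
    fun x hx => hM.quadForm_pos hx
  refine (integrable_exp_neg_mul_sq_norm (half_pos hε)).mono'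
    (by fun_prop : Continuous fun x => Real.exp (-(1 / 2) * quadForm M x)).aestronglyMeasurable
    (ae_of_all _ fun x => ?_)
  rw [Real.norm_of_nonneg (Real.exp_pos _).le, Real.exp_le_exp]
  linarith [hle x]

theorem isFiniteMeasure_acg {R : Matrix (Fin d) (Fin d) ℝ} (hR : R.PosDef) :
    IsFiniteMeasure (acg d R) := by
  have : IsFiniteMeasure (gaussianE d R) := by
    refine ⟨?_⟩
    rw [gaussianE, withDensity_apply _ MeasurableSet.univ, Measure.restrict_univ]
    exact (hR.inv.integrable_exp_quadForm.const_mul _).lintegral_lt_top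
  exact Measure.isFiniteMeasure_map _ _

theorem gaussianE_eq_withDensity_of_det_eq_one {S : Matrix (Fin d) (Fin d) ℝ} (hS : S.det = 1) :
    gaussianE d S = volume.withDensity fun x => ENNReal.ofReal
      ((Real.sqrt ((2 * Real.pi) ^ d))⁻¹ * Real.exp (-(1 / 2) * quadForm S⁻¹ x)) := by
  rw [gaussianE, hS, mul_one]
  rfl

theorem acg_eq_withDensity [NeZero d] {R₀ R : Matrix (Fin d) (Fin d) ℝ} (hR₀ : R₀.PosDef)
    (hR : R.PosDef) (hdet₀ : R₀.det = 1) (hdet : R.det = 1) :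
    acg d R₀ = (acg d R).withDensity
      fun u => ENNReal.ofReal (Real.sqrt (quadForm R⁻¹ u / quadForm R₀⁻¹ u) ^ d) := by
  set c := fun x => Real.sqrt (quadForm R⁻¹ x / quadForm R₀⁻¹ x)
  set g := fun (S : Matrix (Fin d) (Fin d) ℝ) x => ENNReal.ofReal
    ((Real.sqrt ((2 * Real.pi) ^ d))⁻¹ * Real.exp (-(1 / 2) * quadForm S⁻¹ x))
  have hratio : ∀ x ≠ 0, 0 < quadForm R⁻¹ x / quadForm R₀⁻¹ x := fun x hx =>
    div_pos (hR.inv.quadForm_pos hx) (hR₀.inv.quadForm_pos hx)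
  have hc : ∀ x ≠ 0, 0 < c x := fun x hx => Real.sqrt_pos.2 (hratio x hx)
  have hhom : ∀ x, ∀ t : ℝ, 0 < t → c (t • x) = c x := fun x t ht => by
    simp only [c, quadForm_smul, mul_div_mul_left _ _ (pow_ne_zero 2 ht.ne')]
  have hdiff : ∀ x ≠ 0, DifferentiableAt ℝ c x := fun x hx =>
    ((differentiable_quadForm _ x).mul ((differentiable_quadForm _ x).inv
      (hR₀.inv.quadForm_pos hx).ne')).sqrt (hratio x hx).ne'
  have hdens : ∀ x ≠ 0, g R₀ (c x • x) = g R x := fun x hx => by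
    simp only [g, c, quadForm_smul, Real.sq_sqrt (hratio x hx).le,
      div_mul_cancel₀ _ (hR₀.inv.quadForm_pos hx).ne']
  have key := map_inv_norm_smul_withDensity_eq volume hc hhom hdiff (by fun_prop) (by fun_prop)
    hdens
  rwa [finrank_euclideanSpace_fin, ← gaussianE_eq_withDensity_of_det_eq_one hdet₀,
    ← gaussianE_eq_withDensity_of_det_eq_one hdet] at key

end AngularCentralGaussian

theorem kl_acg_acg (d : ℕ) (hd : 1 ≤ d) (R₀ R : Matrix (Fin d) (Fin d) ℝ)
    (hR₀ : R₀.PosDef) (hR : R.PosDef) (hdet₀ : R₀.det = 1) (hdet : R.det = 1) :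
    klDiv (acg d R₀) (acg d R) =
      (d / 2 : ℝ) * ∫ x, Real.log (((fun i => x i) ⬝ᵥ R⁻¹.mulVec fun i => x i) /
        ((fun i => x i) ⬝ᵥ R₀⁻¹.mulVec fun i => x i)) ∂ acg d R₀ := by
  change _ = (d / 2 : ℝ) * ∫ x, Real.log (quadForm R⁻¹ x / quadForm R₀⁻¹ x) ∂acg d R₀
  have : NeZero d := ⟨by omega⟩
  have := isFiniteMeasure_acg hR
  have key := acg_eq_withDensity hR₀ hR hdet₀ hdet
  rw [key, klDiv_withDensity_self _ (by fun_prop), ← key, ← integral_const_mul]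
  refine integral_congr_ae (ae_of_all _ fun x => ?_)
  have hratio : 0 ≤ quadForm R⁻¹ x / quadForm R₀⁻¹ x :=
    div_nonneg (hR.inv.posSemidef.quadForm_nonneg x) (hR₀.inv.posSemidef.quadForm_nonneg x)
  dsimp only
  rw [ENNReal.toReal_ofReal (by positivity), Real.log_pow, Real.log_sqrt hratio]
  ring
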